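/- For f, g ∈ M₁ (multiplicative functions with f(0₁,1₁) = g(0₁,1₁) = 1), the pinched convolution f ⋆̌ g defined by (f ⋆̌ g)(0_n,1_n) = Σ_{π ∈ NC'(n)} f(0_n, π) g(0_n, K(π)) satisfies φ_f(φ_{f ⋆̌ g}(z)) = φ_{f ∗ g}(z), where φ_h(z) = Σ_{n≥1} h(0_n,1_n) z^n. -/

import Mathlib

open scoped Classical
noncomputable section

/-- Formal composition `f ∘ g` of power series (intended for `g` with zero constant
coefficient, in which case this is the usual substitution of `g` into `f`). -/
def pscomp (f g : PowerSeries ℂ) : PowerSeries ℂ :=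
  PowerSeries.mk fun n => ∑ k ∈ Finset.range (n + 1),
    (PowerSeries.coeff k f) * PowerSeries.coeff n (g ^ k)

/-- The series `Σ_{n ≥ 1} f n · zⁿ` associated to a sequence `f`. -/
def phiSeries (f : ℕ → ℂ) : PowerSeries ℂ :=
  PowerSeries.mk fun n => if n = 0 then 0 else f n

/-- A setoid (partition) is non-crossing with respect to a position key `k`:
there is no crossing `k a < k b < k c < k d` with `a ∼ c`, `b ∼ d`, `a ≁ b`. -/
def NonCrossingOn {α : Type*} (k : α → ℤ) (s : Setoid α) : Prop :=
  ∀ a b c d : α, k a < k b → k b < k c → k c < k d → s.r a c → s.r b d → s.r a b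

/-- Non-crossing partitions of `{1, …, n}` in the usual order. -/
def IsNC {n : ℕ} (s : Setoid (Fin n)) : Prop :=
  NonCrossingOn (fun i => (i.val : ℤ)) s

def half {n : ℕ} (x : Fin (2 * n)) : Fin n := ⟨x.val / 2, by omega⟩

/-- The interleaved partition on `{1, 1', 2, 2', …, n, n'}`: even positions are the
unprimed points, carrying `p`; odd positions are the primed points, carrying `t`. -/
def interleave {n : ℕ} (p t : Setoid (Fin n)) : Setoid (Fin (2 * n)) where
  r x y := x.val % 2 = y.val % 2 ∧ (x.val % 2 = 0 → p.r (half x) (half y)) ∧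
    (x.val % 2 = 1 → t.r (half x) (half y))
  iseqv := by
    refine ⟨fun x => ⟨rfl, fun _ => p.iseqv.refl _, fun _ => t.iseqv.refl _⟩, ?_, ?_⟩
    · rintro x y ⟨h1, h2, h3⟩
      exact ⟨h1.symm, fun h0 => p.iseqv.symm (h2 (h1.trans h0)),
        fun h0 => t.iseqv.symm (h3 (h1.trans h0))⟩
    · rintro x y z ⟨h1, h2, h3⟩ ⟨h1', h2', h3'⟩
      exact ⟨h1.trans h1', fun h0 => p.iseqv.trans (h2 h0) (h2' (h1.symm.trans h0)),
        fun h0 => t.iseqv.trans (h3 h0) (h3' (h1.symm.trans h0))⟩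

/-- The Kreweras complement of `p ∈ NC(n)`: the largest partition `t` of the primed
points such that the interleaving of `p` and `t` is non-crossing on `{1,1',…,n,n'}`. -/
def kreweras {n : ℕ} (p : Setoid (Fin n)) : Setoid (Fin n) :=
  sSup {t | IsNC (interleave p t)}

/-- The blocks of a partition, as a finset of finsets. -/
def blocksOf {n : ℕ} (s : Setoid (Fin n)) : Finset (Finset (Fin n)) :=
  Finset.univ.image fun i => Finset.univ.filter fun j => s.r i j

/-- The value `f(0_n, π) = ∏_{V block of π} f(0_{|V|}, 1_{|V|})` of the multiplicative
function determined by the sequence `f n = f(0_n, 1_n)`. -/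
def fval {n : ℕ} (f : ℕ → ℂ) (s : Setoid (Fin n)) : ℂ :=
  ∏ B ∈ blocksOf s, f B.card

instance setoidFintype (n : ℕ) : Fintype (Setoid (Fin n)) :=
  Fintype.ofInjective (fun s => fun a b : Fin n => decide (s.r a b)) (by
    intro s t h
    apply Setoid.ext
    intro a b
    have := congrFun (congrFun h a) b
    simpa [decide_eq_decide] using this)

/-- Restriction of a partition to a block `B`, relabelled along the order
isomorphism `Fin B.card ≃o B`. -/
def restrictS {n : ℕ} (s : Setoid (Fin n)) (B : Finset (Fin n)) : Setoid (Fin B.card) :=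
  Setoid.comap (fun j => (B.orderIsoOfFin rfl j).val) s

/-- The value on the interval `[ρ, σ]` of the (canonical multiplicative extension of
the) multiplicative function determined by the sequence `f`, via the canonical
decomposition `[ρ, σ] ≅ ∏_{B block of σ} [ρ|_B, 1_B]` and
`f(τ, 1_m) = ∏_{C block of K(τ)} f(0_{|C|}, 1_{|C|})`. -/
def intervalVal {n : ℕ} (f : ℕ → ℂ) (ρ σ : Setoid (Fin n)) : ℂ :=
  ∏ B ∈ blocksOf σ, fval f (kreweras (restrictS ρ B))

/-- `NC'(n)`: non-crossing partitions having `{1}` as a (singleton) block. -/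
def IsNCPrime {n : ℕ} (hn : 0 < n) (s : Setoid (Fin n)) : Prop :=
  IsNC s ∧ ∀ j, s.r ⟨0, hn⟩ j → j = ⟨0, hn⟩

/-- The sequence of values `(f ⋆̌ g)(0_n, 1_n) = Σ_{π ∈ NC'(n)} f(0_n,π) g(0_n,K(π))`
of the pinched convolution. -/
def pinchSeq (f g : ℕ → ℂ) : ℕ → ℂ
  | 0 => 0
  | k + 1 => ∑ π : {s : Setoid (Fin (k + 1)) // IsNCPrime (Nat.succ_pos k) s},
      fval f π.1 * fval g (kreweras π.1)

/-- The sequence of values `(f ∗ g)(0_n, 1_n) = Σ_{π ∈ NC(n)} f(0_n,π) g(0_n,K(π))`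
of the multiplicative convolution. -/
def convSeq (f g : ℕ → ℂ) : ℕ → ℂ
  | 0 => 0
  | k + 1 => ∑ π : {s : Setoid (Fin (k + 1)) // IsNC s},
      fval f π.1 * fval g (kreweras π.1)

/-!
Cutting `{1, …, n}` just before each point of the block of `1` of `π ∈ NC(n)` splits it into
consecutive intervals, on each of which `π` restricts to a partition in `NC'`; conversely,
partitions in `NC'(n_i)` of the intervals of a composition `(n_1, …, n_k)` of `n` glue, by
merging their singletons `{1}`, to a unique `π ∈ NC(n)`. Under this bijection
`f(0_n, π) = f(0_k, 1_k) ∏ f(0_{n_i}, π_i)`, the `k` merged singletons costing `f(0_1, 1_1) = 1`,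
and `K(π)` is the juxtaposition of the `K(π_i)`: this is seen on the explicit description of
`K(p)`, whose blocks are the classes of points lying on the same side of every arc of `p`.
Summing, `(f ∗ g)(0_n, 1_n) = Σ f(0_k, 1_k) ∏ (f ⋆̌ g)(0_{n_i}, 1_{n_i})` over the compositions
of `n`, which is the `n`-th coefficient of `φ_f ∘ φ_{f ⋆̌ g}`.
-/

section Kreweras

variable {n : ℕ}

theorem isNC_iff {s : Setoid (Fin n)} :
    IsNC s ↔ ∀ a b c d : Fin n, a < b → b < c → c < d → s.r a c → s.r b d → s.r a b := by
  simp only [IsNC, NonCrossingOn, Fin.lt_def, Nat.cast_lt]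

/-- The Kreweras complement made explicit: in the interleaving `1, 1', 2, 2', …` the primed
point `j'` lies between `a` and `b` iff `a ≤ j < b`. -/
def sameSide (p : Setoid (Fin n)) : Setoid (Fin n) where
  r j l := ∀ a b, p.r a b → (a ≤ j ∧ j < b ↔ a ≤ l ∧ l < b)
  iseqv := ⟨fun _ _ _ _ => Iff.rfl, fun h a b hab => (h a b hab).symm,
    fun h₁ h₂ a b hab => (h₁ a b hab).trans (h₂ a b hab)⟩

def unprimed (a : Fin n) : Fin (2 * n) := ⟨2 * a, by omega⟩

def primed (a : Fin n) : Fin (2 * n) := ⟨2 * a + 1, by omega⟩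

theorem half_unprimed (a : Fin n) : half (unprimed a) = a := Fin.ext (by simp [half, unprimed])

theorem half_primed (a : Fin n) : half (primed a) = a := Fin.ext (by simp [half, primed]; omega)

theorem interleave_iff_of_even {p t : Setoid (Fin n)} {x y : Fin (2 * n)} (hx : x.val % 2 = 0)
    (hy : y.val % 2 = 0) : (interleave p t).r x y ↔ p.r (half x) (half y) :=
  ⟨fun h => h.2.1 hx, fun h => ⟨hx.trans hy.symm, fun _ => h, fun h1 => by omega⟩⟩

theorem interleave_iff_of_odd {p t : Setoid (Fin n)} {x y : Fin (2 * n)} (hx : x.val % 2 = 1)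
    (hy : y.val % 2 = 1) : (interleave p t).r x y ↔ t.r (half x) (half y) :=
  ⟨fun h => h.2.2 hx, fun h => ⟨hx.trans hy.symm, fun h0 => by omega, fun _ => h⟩⟩

theorem mod_two_eq_of_interleave {p t : Setoid (Fin n)} {x y : Fin (2 * n)}
    (h : (interleave p t).r x y) : x.val % 2 = y.val % 2 := h.1

theorem interleave_unprimed_iff {p t : Setoid (Fin n)} {a b : Fin n} :
    (interleave p t).r (unprimed a) (unprimed b) ↔ p.r a b := by
  rw [interleave_iff_of_even (by simp [unprimed]) (by simp [unprimed]), half_unprimed,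
    half_unprimed]

theorem interleave_primed_iff {p t : Setoid (Fin n)} {a b : Fin n} :
    (interleave p t).r (primed a) (primed b) ↔ t.r a b := by
  rw [interleave_iff_of_odd (by simp [primed]) (by simp [primed]), half_primed, half_primed]

theorem mem_arc_of_isNC_interleave {p t : Setoid (Fin n)} (ht : IsNC (interleave p t))
    {j l a b : Fin n} (hjl : t.r j l) (hab : p.r a b) (hj : a ≤ j ∧ j < b) : a ≤ l ∧ l < b := by
  rw [isNC_iff] at ht
  simp only [Fin.le_def, Fin.lt_def] at hj ⊢
  by_contra hl
  have parity : ∀ x y : Fin n, ¬ (interleave p t).r (unprimed x) (primed y) := fun x y h => by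
    have := mod_two_eq_of_interleave h
    simp [primed, unprimed] at this
  rcases Nat.lt_or_ge l a with hla | hbl
  · exact parity a l <| (interleave p t).symm <|
      ht (primed l) (unprimed a) (primed j) (unprimed b)
        (by simp only [Fin.lt_def, unprimed, primed]; omega)
        (by simp only [Fin.lt_def, unprimed, primed]; omega)
        (by simp only [Fin.lt_def, unprimed, primed]; omega)
        (interleave_primed_iff.2 (t.symm hjl)) (interleave_unprimed_iff.2 hab)
  · exact parity a j <|
      ht (unprimed a) (primed j) (unprimed b) (primed l)
        (by simp only [Fin.lt_def, unprimed, primed]; omega)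
        (by simp only [Fin.lt_def, unprimed, primed]; omega)
        (by simp only [Fin.lt_def, unprimed, primed]; omega)
        (interleave_unprimed_iff.2 hab) (interleave_primed_iff.2 hjl)

theorem le_sameSide_of_isNC_interleave {p t : Setoid (Fin n)} (ht : IsNC (interleave p t)) :
    t ≤ sameSide p := fun _ _ hjl _ _ hab =>
  ⟨mem_arc_of_isNC_interleave ht hjl hab, mem_arc_of_isNC_interleave ht (t.symm hjl) hab⟩

theorem isNC_interleave_sameSide {p : Setoid (Fin n)} (hp : IsNC p) :
    IsNC (interleave p (sameSide p)) := by
  rw [isNC_iff] at hp ⊢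
  intro x₁ x₂ x₃ x₄ h₁₂ h₂₃ h₃₄ h₁₃ h₂₄
  have hval : ∀ x : Fin (2 * n), (half x).val = x.val / 2 := fun _ => rfl
  simp only [Fin.lt_def] at h₁₂ h₂₃ h₃₄
  have p₁₃ := mod_two_eq_of_interleave h₁₃
  have p₂₄ := mod_two_eq_of_interleave h₂₄
  rcases Nat.mod_two_eq_zero_or_one x₁ with e₁ | o₁ <;>
    rcases Nat.mod_two_eq_zero_or_one x₂ with e₂ | o₂
  · rw [interleave_iff_of_even e₁ (by omega)] at h₁₃
    rw [interleave_iff_of_even e₂ (by omega)] at h₂₄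
    rw [interleave_iff_of_even e₁ e₂]
    exact hp _ _ _ _ (by rw [Fin.lt_def, hval, hval]; omega)
      (by rw [Fin.lt_def, hval, hval]; omega) (by rw [Fin.lt_def, hval, hval]; omega) h₁₃ h₂₄
  · rw [interleave_iff_of_even e₁ (by omega)] at h₁₃
    rw [interleave_iff_of_odd o₂ (by omega)] at h₂₄
    have := h₂₄ _ _ h₁₃
    simp only [Fin.le_def, Fin.lt_def, hval] at this
    omega
  · rw [interleave_iff_of_odd o₁ (by omega)] at h₁₃
    rw [interleave_iff_of_even e₂ (by omega)] at h₂₄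
    have := h₁₃ _ _ h₂₄
    simp only [Fin.le_def, Fin.lt_def, hval] at this
    omega
  · rw [interleave_iff_of_odd o₁ (by omega)] at h₁₃
    rw [interleave_iff_of_odd o₂ (by omega)] at h₂₄
    rw [interleave_iff_of_odd o₁ o₂]
    intro u v huv
    have h₁ := h₁₃ u v huv
    have h₂ := h₂₄ u v huv
    simp only [Fin.le_def, Fin.lt_def, hval] at h₁ h₂ ⊢
    omega

theorem kreweras_eq_sameSide {p : Setoid (Fin n)} (hp : IsNC p) : kreweras p = sameSide p :=
  le_antisymm (sSup_le fun _ => le_sameSide_of_isNC_interleave)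
    (le_sSup (isNC_interleave_sameSide hp))

end Kreweras

def ZeroIsSingleton {m : ℕ} (hm : 0 < m) (s : Setoid (Fin m)) : Prop :=
  ∀ j, s.r ⟨0, hm⟩ j → j = ⟨0, hm⟩

theorem ZeroIsSingleton.coe_eq_zero_iff {m : ℕ} {hm : 0 < m} {s : Setoid (Fin m)}
    (hs : ZeroIsSingleton hm s) {a b : Fin m} (hab : s.r a b) : (a : ℕ) = 0 ↔ (b : ℕ) = 0 := by
  refine ⟨fun ha => ?_, fun hb => ?_⟩
  · obtain rfl : a = ⟨0, hm⟩ := Fin.ext ha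
    rw [hs b hab]
  · obtain rfl : b = ⟨0, hm⟩ := Fin.ext hb
    rw [hs a (s.symm hab)]

section Blocks

variable {n : ℕ}

def classOf (s : Setoid (Fin n)) (x : Fin n) : Finset (Fin n) :=
  Finset.univ.filter fun y => s.r x y

@[simp]
theorem mem_classOf {s : Setoid (Fin n)} {x y : Fin n} : y ∈ classOf s x ↔ s.r x y := by
  simp [classOf]

theorem blocksOf_eq_image (s : Setoid (Fin n)) : blocksOf s = Finset.univ.image (classOf s) :=
  rfl

theorem blocksOf_eq_union (s : Setoid (Fin n)) (p : Fin n → Prop) :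
    blocksOf s = (Finset.univ.filter p).image (classOf s) ∪
      (Finset.univ.filter fun x => ¬ p x).image (classOf s) := by
  rw [blocksOf_eq_image, ← Finset.image_union, Finset.filter_union_filter_not_eq]

theorem disjoint_image_classOf (s : Setoid (Fin n)) {p : Fin n → Prop}
    (hp : ∀ x y, s.r x y → (p x ↔ p y)) :
    Disjoint ((Finset.univ.filter p).image (classOf s))
      ((Finset.univ.filter fun x => ¬ p x).image (classOf s)) := by
  simp only [Finset.disjoint_left, Finset.mem_image, Finset.mem_filter, Finset.mem_univ, true_and]
  rintro _ ⟨x, hx, rfl⟩ ⟨y, hy, hxy⟩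
  have : s.r x y := mem_classOf.1 (hxy ▸ mem_classOf.2 (s.refl y))
  exact hy ((hp x y this).1 hx)

end Blocks

namespace Composition

variable {n : ℕ} (c : Composition n)

theorem lt_sizeUpTo_index_add_blocksFun (x : Fin n) :
    (x : ℕ) < c.sizeUpTo (c.index x) + c.blocksFun (c.index x) := by
  simpa [c.sizeUpTo_succ'] using c.lt_sizeUpTo_index_succ x

theorem sizeUpTo_add_blocksFun_le {i j : Fin c.length} (h : i < j) :
    c.sizeUpTo i + c.blocksFun i ≤ c.sizeUpTo j := by
  rw [← c.sizeUpTo_succ']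
  exact c.monotone_sizeUpTo (Nat.succ_le_of_lt h)

theorem index_eq_of_le_of_lt {i : Fin c.length} {x : Fin n} (h₁ : c.sizeUpTo i ≤ x)
    (h₂ : (x : ℕ) < c.sizeUpTo i + c.blocksFun i) : c.index x = i := by
  by_contra hne
  have := c.sizeUpTo_index_le x
  have := c.lt_sizeUpTo_index_add_blocksFun x
  rcases lt_or_gt_of_ne hne with h | h
  · have := c.sizeUpTo_add_blocksFun_le h; omega
  · have := c.sizeUpTo_add_blocksFun_le h; omega

theorem index_eq_of_embedding_eq {i j : Fin c.length} {a : Fin (c.blocksFun i)}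
    {b : Fin (c.blocksFun j)} (h : c.embedding i a = c.embedding j b) : i = j := by
  simpa using congrArg c.index h

def blockStart (i : Fin c.length) : Fin n := c.embedding i ⟨0, c.one_le_blocksFun i⟩

def IsStart (x : Fin n) : Prop := (x : ℕ) = c.sizeUpTo (c.index x)

variable {c} in
theorem isStart_embedding_iff {i : Fin c.length} {a : Fin (c.blocksFun i)} :
    c.IsStart (c.embedding i a) ↔ (a : ℕ) = 0 := by
  simp [IsStart]

theorem isStart_blockStart (i : Fin c.length) : c.IsStart (c.blockStart i) :=
  isStart_embedding_iff.2 rfl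

theorem isStart_zero (hn : 0 < n) : c.IsStart ⟨0, hn⟩ :=
  (Nat.le_zero.1 (c.sizeUpTo_index_le ⟨0, hn⟩)).symm

theorem coe_blockStart (i : Fin c.length) : (c.blockStart i : ℕ) = c.sizeUpTo i := by
  simp [blockStart]

def juxtapose (T : ∀ i, Setoid (Fin (c.blocksFun i))) : Setoid (Fin n) where
  r x y := ∃ i a b, (T i).r a b ∧ c.embedding i a = x ∧ c.embedding i b = y
  iseqv := by
    refine ⟨fun x => ⟨_, _, _, (T _).refl _, c.embedding_comp_inv x, c.embedding_comp_inv x⟩,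
      fun ⟨i, a, b, hab, hx, hy⟩ => ⟨i, b, a, (T i).symm hab, hy, hx⟩, ?_⟩
    rintro x y z ⟨i, a, b, hab, rfl, rfl⟩ ⟨i', b', d, hbd, hb, rfl⟩
    obtain rfl := c.index_eq_of_embedding_eq hb
    obtain rfl := (c.embedding _).injective hb
    exact ⟨_, a, d, (T _).trans hab hbd, rfl, rfl⟩

variable {c} in
theorem juxtapose_embedding_iff {T : ∀ i, Setoid (Fin (c.blocksFun i))} {i : Fin c.length}
    {a b : Fin (c.blocksFun i)} :
    (c.juxtapose T).r (c.embedding i a) (c.embedding i b) ↔ (T i).r a b := by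
  refine ⟨fun ⟨i', a', b', h, ha, hb⟩ => ?_, fun h => ⟨i, a, b, h, rfl, rfl⟩⟩
  obtain rfl : i' = i := c.index_eq_of_embedding_eq ha
  rwa [(c.embedding i').injective ha, (c.embedding i').injective hb] at h

def glue (P : ∀ i, Setoid (Fin (c.blocksFun i))) : Setoid (Fin n) where
  r x y := (c.IsStart x ∧ c.IsStart y) ∨ (¬ c.IsStart x ∧ ¬ c.IsStart y ∧ (c.juxtapose P).r x y)
  iseqv := by
    refine ⟨fun x => ?_, ?_, ?_⟩
    · by_cases hx : c.IsStart x
      exacts [Or.inl ⟨hx, hx⟩, Or.inr ⟨hx, hx, (c.juxtapose P).refl x⟩]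
    · rintro x y (⟨hx, hy⟩ | ⟨hx, hy, h⟩)
      exacts [Or.inl ⟨hy, hx⟩, Or.inr ⟨hy, hx, (c.juxtapose P).symm h⟩]
    · rintro x y z (⟨hx, hy⟩ | ⟨hx, hy, h⟩) (⟨hy', hz⟩ | ⟨hy', hz, h'⟩)
      exacts [Or.inl ⟨hx, hz⟩, (hy' hy).elim, (hy hy').elim,
        Or.inr ⟨hx, hz, (c.juxtapose P).trans h h'⟩]

def restrict (s : Setoid (Fin n)) (i : Fin c.length) : Setoid (Fin (c.blocksFun i)) :=
  s.comap (c.embedding i)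

variable {c}

theorem index_eq_of_embedding_lt_of_lt_embedding {i : Fin c.length} {a b : Fin (c.blocksFun i)}
    {x : Fin n} (ha : c.embedding i a < x) (hb : x < c.embedding i b) : c.index x = i :=
  c.index_eq_of_le_of_lt (by simp [Fin.lt_def] at ha; omega)
    (by simp [Fin.lt_def] at hb; omega)

theorem not_isStart_of_embedding_lt_of_lt_embedding {i : Fin c.length}
    {a b : Fin (c.blocksFun i)} {x : Fin n} (ha : c.embedding i a < x)
    (hb : x < c.embedding i b) : ¬ c.IsStart x := by
  have hx := c.index_eq_of_embedding_lt_of_lt_embedding ha hb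
  simp only [IsStart, hx]
  simp [Fin.lt_def] at ha
  omega

theorem isNC_glue {P : ∀ i, Setoid (Fin (c.blocksFun i))} (hP : ∀ i, IsNC (P i)) :
    IsNC (c.glue P) := by
  rw [isNC_iff]
  intro x₁ x₂ x₃ x₄ h₁₂ h₂₃ h₃₄ h₁₃ h₂₄
  rcases h₁₃ with ⟨s₁, s₃⟩ | ⟨n₁, -, i, a₁, a₃, h₁₃, rfl, rfl⟩ <;>
    rcases h₂₄ with ⟨s₂, s₄⟩ | ⟨n₂, n₄, j, a₂, a₄, h₂₄, rfl, rfl⟩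
  · exact Or.inl ⟨s₁, s₂⟩
  · exact (not_isStart_of_embedding_lt_of_lt_embedding h₂₃ h₃₄ s₃).elim
  · exact (not_isStart_of_embedding_lt_of_lt_embedding h₁₂ h₂₃ s₂).elim
  · obtain rfl : j = i := by
      simpa using c.index_eq_of_embedding_lt_of_lt_embedding h₁₂ h₂₃
    exact Or.inr ⟨n₁, n₂, juxtapose_embedding_iff.2 <| isNC_iff.1 (hP j) a₁ a₂ a₃ a₄
      ((c.embedding j).lt_iff_lt.1 h₁₂) ((c.embedding j).lt_iff_lt.1 h₂₃)
      ((c.embedding j).lt_iff_lt.1 h₃₄) h₁₃ h₂₄⟩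


theorem lt_or_ge_of_index_ne {x : Fin n} {i : Fin c.length} (h : c.index x ≠ i) :
    (x : ℕ) < c.sizeUpTo i ∨ c.sizeUpTo i + c.blocksFun i ≤ x := by
  by_contra! hx
  exact h (c.index_eq_of_le_of_lt hx.1 hx.2)

theorem IsStart.le_or_ge {x : Fin n} (hx : c.IsStart x) (i : Fin c.length) :
    (x : ℕ) ≤ c.sizeUpTo i ∨ c.sizeUpTo i + c.blocksFun i ≤ x := by
  by_cases h : c.index x = i
  · exact Or.inl (hx.trans (by rw [h])).le
  · exact (lt_or_ge_of_index_ne h).imp le_of_lt id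

theorem glue_embedding_iff {P : ∀ i, Setoid (Fin (c.blocksFun i))}
    (hP : ∀ i, ZeroIsSingleton (c.one_le_blocksFun i) (P i)) {i : Fin c.length}
    {a b : Fin (c.blocksFun i)} :
    (c.glue P).r (c.embedding i a) (c.embedding i b) ↔ (P i).r a b := by
  refine ⟨?_, fun h => ?_⟩
  · rintro (⟨ha, hb⟩ | ⟨-, -, h⟩)
    · rw [isStart_embedding_iff] at ha hb
      rw [Fin.ext (ha.trans hb.symm)]
    · exact juxtapose_embedding_iff.1 h
  · by_cases ha : (a : ℕ) = 0
    · exact Or.inl ⟨isStart_embedding_iff.2 ha,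
        isStart_embedding_iff.2 (((hP i).coe_eq_zero_iff h).1 ha)⟩
    · exact Or.inr ⟨mt isStart_embedding_iff.1 ha,
        mt isStart_embedding_iff.1 (mt ((hP i).coe_eq_zero_iff h).2 ha),
        juxtapose_embedding_iff.2 h⟩

theorem restrict_glue {P : ∀ i, Setoid (Fin (c.blocksFun i))}
    (hP : ∀ i, ZeroIsSingleton (c.one_le_blocksFun i) (P i)) : c.restrict (c.glue P) = P :=
  funext fun _ => Setoid.ext fun _ _ => glue_embedding_iff hP

theorem index_eq_of_sameSide_glue {P : ∀ i, Setoid (Fin (c.blocksFun i))} {j l : Fin n}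
    (h : (sameSide (c.glue P)).r j l) : c.index j = c.index l := by
  by_contra hne
  wlog hlt : c.index j < c.index l generalizing j l
  · exact this ((sameSide _).symm h) (Ne.symm hne) (lt_of_le_of_ne (not_lt.1 hlt) (Ne.symm hne))
  have harc := h (c.blockStart (c.index j)) (c.blockStart (c.index l))
    (Or.inl ⟨c.isStart_blockStart _, c.isStart_blockStart _⟩)
  have := c.sizeUpTo_add_blocksFun_le hlt
  have := c.sizeUpTo_index_le j
  have := c.lt_sizeUpTo_index_add_blocksFun j
  have := c.sizeUpTo_index_le l
  simp only [Fin.le_def, Fin.lt_def, coe_blockStart] at harc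
  omega

theorem sameSide_glue {P : ∀ i, Setoid (Fin (c.blocksFun i))}
    (hP : ∀ i, ZeroIsSingleton (c.one_le_blocksFun i) (P i)) :
    sameSide (c.glue P) = c.juxtapose fun i => sameSide (P i) := by
  ext j l
  constructor
  · intro h
    obtain ⟨i, a, rfl⟩ : ∃ i a, c.embedding i a = j := ⟨_, _, c.embedding_comp_inv j⟩
    obtain ⟨b, rfl⟩ : l ∈ Set.range (c.embedding i) :=
      c.mem_range_embedding_iff'.2 (by simpa using index_eq_of_sameSide_glue h)
    refine ⟨i, a, b, fun u v huv => ?_, rfl, rfl⟩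
    by_cases hu : (u : ℕ) = 0
    · have hv := ((hP i).coe_eq_zero_iff huv).1 hu
      simp only [Fin.le_def, Fin.lt_def, hu, hv]
      omega
    · have := h _ _ (Or.inr ⟨mt isStart_embedding_iff.1 hu,
        mt isStart_embedding_iff.1 (mt ((hP i).coe_eq_zero_iff huv).2 hu),
        juxtapose_embedding_iff.2 huv⟩)
      simpa only [(c.embedding i).le_iff_le, (c.embedding i).lt_iff_lt] using this
  · rintro ⟨i, a, b, hab, rfl, rfl⟩ x y (⟨sx, sy⟩ | ⟨-, -, i', u, v, huv, rfl, rfl⟩)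
    · have := sx.le_or_ge i
      have := sy.le_or_ge i
      have := a.isLt
      have := b.isLt
      simp only [Fin.le_def, Fin.lt_def, coe_embedding]
      omega
    · by_cases hi : i' = i
      · subst hi
        simpa only [(c.embedding i').le_iff_le, (c.embedding i').lt_iff_lt] using hab u v huv
      · have hu := lt_or_ge_of_index_ne (x := c.embedding i' u) (i := i) (by simpa using hi)
        have hv := lt_or_ge_of_index_ne (x := c.embedding i' v) (i := i) (by simpa using hi)
        have := a.isLt
        have := b.isLt
        simp only [Fin.le_def, Fin.lt_def, coe_embedding] at hu hv ⊢
        omega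


theorem classOf_juxtapose_embedding (T : ∀ i, Setoid (Fin (c.blocksFun i))) (i : Fin c.length)
    (a : Fin (c.blocksFun i)) :
    classOf (c.juxtapose T) (c.embedding i a) =
      (classOf (T i) a).map (c.embedding i).toEmbedding := by
  ext y
  simp only [mem_classOf, Finset.mem_map, RelEmbedding.coe_toEmbedding]
  refine ⟨fun ⟨i', a', b, h, ha, hb⟩ => ?_, fun ⟨b, h, hb⟩ => hb ▸ juxtapose_embedding_iff.2 h⟩
  obtain rfl := c.index_eq_of_embedding_eq ha
  obtain rfl := (c.embedding _).injective ha
  exact ⟨b, h, hb⟩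

theorem blocksOf_juxtapose (T : ∀ i, Setoid (Fin (c.blocksFun i))) :
    blocksOf (c.juxtapose T) = Finset.univ.biUnion fun i =>
      (blocksOf (T i)).image fun B => B.map (c.embedding i).toEmbedding := by
  ext B
  simp only [blocksOf_eq_image, Finset.mem_biUnion, Finset.mem_image, Finset.mem_univ, true_and]
  constructor
  · rintro ⟨x, rfl⟩
    exact ⟨c.index x, _, ⟨c.invEmbedding x, rfl⟩,
      by rw [← classOf_juxtapose_embedding, c.embedding_comp_inv]⟩
  · rintro ⟨i, _, ⟨a, rfl⟩, rfl⟩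
    exact ⟨c.embedding i a, classOf_juxtapose_embedding T i a⟩

theorem fval_juxtapose (f : ℕ → ℂ) (T : ∀ i, Setoid (Fin (c.blocksFun i))) :
    fval f (c.juxtapose T) = ∏ i, fval f (T i) := by
  rw [fval, blocksOf_juxtapose, Finset.prod_biUnion]
  · refine Finset.prod_congr rfl fun i _ => ?_
    rw [Finset.prod_image fun B _ B' _ h => Finset.map_injective _ h]
    simp [fval]
  · intro i _ j _ hij
    simp only [Function.onFun, Finset.disjoint_left, Finset.mem_image, blocksOf_eq_image,
      Finset.mem_univ, true_and]
    rintro _ ⟨_, ⟨a, rfl⟩, rfl⟩ ⟨D, -, hD⟩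
    have : c.embedding i a ∈ D.map (c.embedding j).toEmbedding := by
      rw [hD]
      exact Finset.mem_map_of_mem _ (mem_classOf.2 ((T i).refl a))
    obtain ⟨b, -, hb⟩ := Finset.mem_map.1 this
    exact hij (c.index_eq_of_embedding_eq hb).symm

theorem card_filter_isStart : (Finset.univ.filter c.IsStart).card = c.length := by
  have : Finset.univ.filter c.IsStart = Finset.univ.image c.blockStart := by
    ext x
    simp only [Finset.mem_filter, Finset.mem_image, Finset.mem_univ, true_and]
    refine ⟨fun hx => ⟨c.index x, Fin.ext ?_⟩, fun ⟨i, hi⟩ => hi ▸ c.isStart_blockStart i⟩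
    rw [coe_blockStart, ← hx]
  rw [this, Finset.card_image_of_injective _
      (show Function.Injective c.blockStart from fun _ _ h => c.index_eq_of_embedding_eq h),
    Finset.card_univ, Fintype.card_fin]

variable {P : ∀ i, Setoid (Fin (c.blocksFun i))}

theorem isStart_iff_of_juxtapose (hP : ∀ i, ZeroIsSingleton (c.one_le_blocksFun i) (P i))
    {x y : Fin n} (h : (c.juxtapose P).r x y) : c.IsStart x ↔ c.IsStart y := by
  obtain ⟨i, a, b, hab, rfl, rfl⟩ := h
  rw [isStart_embedding_iff, isStart_embedding_iff]
  exact (hP i).coe_eq_zero_iff hab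

theorem classOf_glue_of_isStart {x : Fin n} (hx : c.IsStart x) :
    classOf (c.glue P) x = Finset.univ.filter c.IsStart := by
  ext y
  simp only [mem_classOf, Finset.mem_filter, Finset.mem_univ, true_and]
  exact ⟨fun h => h.elim And.right fun h => (h.1 hx).elim, fun hy => Or.inl ⟨hx, hy⟩⟩

theorem classOf_glue_of_not_isStart (hP : ∀ i, ZeroIsSingleton (c.one_le_blocksFun i) (P i))
    {x : Fin n} (hx : ¬ c.IsStart x) : classOf (c.glue P) x = classOf (c.juxtapose P) x := by
  ext y
  simp only [mem_classOf]
  refine ⟨fun h => h.elim (fun h => (hx h.1).elim) fun h => h.2.2, fun h => Or.inr ⟨hx, ?_, h⟩⟩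
  rwa [← isStart_iff_of_juxtapose hP h]

theorem classOf_juxtapose_of_isStart (hP : ∀ i, ZeroIsSingleton (c.one_le_blocksFun i) (P i))
    {x : Fin n} (hx : c.IsStart x) : classOf (c.juxtapose P) x = {x} := by
  ext y
  simp only [mem_classOf, Finset.mem_singleton]
  refine ⟨fun ⟨i, a, b, hab, ha, hb⟩ => ?_, fun h => h ▸ (c.juxtapose P).refl x⟩
  subst ha hb
  have ha := isStart_embedding_iff.1 hx
  rw [Fin.ext (((hP i).coe_eq_zero_iff hab).1 ha |>.trans ha.symm)]

theorem fval_glue {f : ℕ → ℂ} (hf : f 1 = 1)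
    (hP : ∀ i, ZeroIsSingleton (c.one_le_blocksFun i) (P i))
    (hn : 0 < n) : fval f (c.glue P) = f c.length * fval f (c.juxtapose P) := by
  have hstarts : (Finset.univ.filter c.IsStart).image (classOf (c.glue P)) =
      {Finset.univ.filter c.IsStart} := by
    rw [Finset.image_congr fun x hx => classOf_glue_of_isStart (Finset.mem_filter.1 hx).2]
    exact Finset.image_const ⟨⟨0, hn⟩, Finset.mem_filter.2 ⟨Finset.mem_univ _, c.isStart_zero hn⟩⟩ _
  have hrest : (Finset.univ.filter fun x => ¬ c.IsStart x).image (classOf (c.glue P)) =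
      (Finset.univ.filter fun x => ¬ c.IsStart x).image (classOf (c.juxtapose P)) :=
    Finset.image_congr fun x hx => classOf_glue_of_not_isStart hP (Finset.mem_filter.1 hx).2
  have hsingletons : ∏ B ∈ (Finset.univ.filter c.IsStart).image (classOf (c.juxtapose P)),
      f B.card = 1 := by
    refine Finset.prod_eq_one fun B hB => ?_
    obtain ⟨x, hx, rfl⟩ := Finset.mem_image.1 hB
    rw [classOf_juxtapose_of_isStart hP (Finset.mem_filter.1 hx).2, Finset.card_singleton, hf]
  have hdisj : Disjoint {Finset.univ.filter c.IsStart}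
      ((Finset.univ.filter fun x => ¬ c.IsStart x).image (classOf (c.juxtapose P))) := by
    refine Finset.disjoint_singleton_left.2 fun h => ?_
    obtain ⟨x, hx, hxB⟩ := Finset.mem_image.1 h
    have : x ∈ Finset.univ.filter c.IsStart := hxB ▸ mem_classOf.2 ((c.juxtapose P).refl x)
    exact (Finset.mem_filter.1 hx).2 (Finset.mem_filter.1 this).2
  rw [fval, fval, blocksOf_eq_union _ c.IsStart, blocksOf_eq_union _ c.IsStart, hstarts, hrest,
    Finset.prod_union hdisj, Finset.prod_union (disjoint_image_classOf _ fun _ _ =>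
      isStart_iff_of_juxtapose hP), hsingletons, Finset.prod_singleton, card_filter_isStart,
    one_mul]

theorem isStart_iff_castSucc_mem_boundaries (c : Composition n) {x : Fin n} :
    c.IsStart x ↔ x.castSucc ∈ c.boundaries := by
  simp only [boundaries, Finset.mem_map, Finset.mem_univ, true_and, RelEmbedding.coe_toEmbedding,
    boundary, OrderEmbedding.coe_ofStrictMono, Fin.ext_iff, Fin.val_castSucc]
  refine ⟨fun hx => ⟨(c.index x).castSucc, hx.symm⟩, fun ⟨i, hi⟩ => ?_⟩
  have hlt : (i : ℕ) < c.length := by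
    by_contra! h
    have := c.sizeUpTo_ofLength_le i h
    omega
  have := c.one_le_blocksFun ⟨i, hlt⟩
  rw [IsStart, c.index_eq_of_le_of_lt (i := ⟨i, hlt⟩) hi.le (by simp only; omega), ← hi]

theorem ext_of_isStart_iff {c d : Composition n} (h : ∀ x, c.IsStart x ↔ d.IsStart x) :
    c = d := by
  refine (compositionEquiv n).injective (CompositionAsSet.ext ?_)
  show c.boundaries = d.boundaries
  ext b
  induction b using Fin.lastCases with
  | last => exact iff_of_true (c.toCompositionAsSet.getLast_mem) (d.toCompositionAsSet.getLast_mem)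
  | cast x => rw [← isStart_iff_castSucc_mem_boundaries, ← isStart_iff_castSucc_mem_boundaries, h]

end Composition

section ZeroBlock

variable {n : ℕ} (s : Setoid (Fin n)) (hn : 0 < n)

def zeroBlockComposition : Composition n :=
  CompositionAsSet.toComposition
    { boundaries := (classOf s ⟨0, hn⟩).image Fin.castSucc ∪ {Fin.last n}
      zero_mem := Finset.mem_union_left _ (Finset.mem_image_of_mem _ (mem_classOf.2 (s.refl _)))
      getLast_mem := Finset.mem_union_right _ (Finset.mem_singleton_self _) }

variable {s hn}

theorem isStart_zeroBlockComposition_iff {x : Fin n} :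
    (zeroBlockComposition s hn).IsStart x ↔ s.r ⟨0, hn⟩ x := by
  rw [Composition.isStart_iff_castSucc_mem_boundaries, zeroBlockComposition,
    CompositionAsSet.toComposition_boundaries]
  simp only [Finset.mem_union, Finset.mem_image, Finset.mem_singleton, mem_classOf,
    Fin.castSucc_inj, exists_eq_right, Fin.castSucc_ne_last, or_false]

theorem zeroBlockComposition_glue (c : Composition n) (P : ∀ i, Setoid (Fin (c.blocksFun i))) :
    zeroBlockComposition (c.glue P) hn = c := by
  refine Composition.ext_of_isStart_iff fun x => ?_
  rw [isStart_zeroBlockComposition_iff]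
  exact ⟨fun h => h.elim And.right fun h => (h.1 (c.isStart_zero hn)).elim,
    fun hx => Or.inl ⟨c.isStart_zero hn, hx⟩⟩

theorem index_zeroBlockComposition_eq_of_rel (hs : IsNC s) {x y : Fin n} (hxy : s.r x y)
    (hx : ¬ s.r ⟨0, hn⟩ x) :
    (zeroBlockComposition s hn).index x = (zeroBlockComposition s hn).index y := by
  set c := zeroBlockComposition s hn
  have hy : ¬ s.r ⟨0, hn⟩ y := fun h => hx (s.trans h (s.symm hxy))
  by_contra hne
  wlog hlt : c.index y < c.index x generalizing x y
  · exact this (s.symm hxy) hy hx (Ne.symm hne) (lt_of_le_of_ne (not_lt.1 hlt) hne)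
  -- `v` starts the interval of `x`, so `0 < y < v < x` with `0 ∼ v`, `y ∼ x` would cross
  set v := c.blockStart (c.index x)
  have hv : s.r ⟨0, hn⟩ v := isStart_zeroBlockComposition_iff.1 (c.isStart_blockStart _)
  have hyv : (y : ℕ) < v := by
    have := c.lt_sizeUpTo_index_add_blocksFun y
    have := c.sizeUpTo_add_blocksFun_le hlt
    rw [Composition.coe_blockStart]
    omega
  have hvx : (v : ℕ) ≤ x := by rw [Composition.coe_blockStart]; exact c.sizeUpTo_index_le x
  rcases hvx.eq_or_lt with hvx | hvx
  · exact hx (Fin.ext hvx ▸ hv)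
  have hy0 : 0 < (y : ℕ) := Nat.pos_of_ne_zero fun h => hy (by
    rw [show y = ⟨0, hn⟩ from Fin.ext h])
  exact hy (isNC_iff.1 hs _ _ _ _ (Fin.lt_def.2 hy0) (Fin.lt_def.2 hyv) (Fin.lt_def.2 hvx) hv
    (s.symm hxy))

theorem glue_restrict_zeroBlockComposition (hs : IsNC s) :
    (zeroBlockComposition s hn).glue ((zeroBlockComposition s hn).restrict s) = s := by
  set c := zeroBlockComposition s hn
  ext x y
  constructor
  · rintro (⟨hx, hy⟩ | ⟨-, -, i, a, b, hab, rfl, rfl⟩)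
    · exact s.trans (s.symm (isStart_zeroBlockComposition_iff.1 hx))
        (isStart_zeroBlockComposition_iff.1 hy)
    · exact hab
  · intro hxy
    by_cases hx : s.r ⟨0, hn⟩ x
    · exact Or.inl ⟨isStart_zeroBlockComposition_iff.2 hx,
        isStart_zeroBlockComposition_iff.2 (s.trans hx hxy)⟩
    obtain ⟨b, rfl⟩ : y ∈ Set.range (c.embedding (c.index x)) :=
      c.mem_range_embedding_iff'.2 (index_zeroBlockComposition_eq_of_rel hs hxy hx)
    refine Or.inr ⟨mt isStart_zeroBlockComposition_iff.1 hx,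
      mt isStart_zeroBlockComposition_iff.1 fun h => hx (s.trans h (s.symm hxy)),
      c.index x, c.invEmbedding x, b, ?_, c.embedding_comp_inv x, rfl⟩
    show s.r _ _
    rwa [c.embedding_comp_inv x]

theorem zeroIsSingleton_restrict_zeroBlockComposition (i : Fin (zeroBlockComposition s hn).length) :
    ZeroIsSingleton ((zeroBlockComposition s hn).one_le_blocksFun i)
      ((zeroBlockComposition s hn).restrict s i) := by
  intro b hb
  have h₀ : s.r ⟨0, hn⟩ ((zeroBlockComposition s hn).blockStart i) :=
    isStart_zeroBlockComposition_iff.1 (Composition.isStart_blockStart _ i)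
  exact Fin.ext (Composition.isStart_embedding_iff.1
    (isStart_zeroBlockComposition_iff.2 (s.trans h₀ hb)))

end ZeroBlock

theorem IsNC.comap {m n : ℕ} {s : Setoid (Fin n)} (hs : IsNC s) (e : Fin m ↪o Fin n) :
    IsNC (s.comap e) := by
  rw [isNC_iff] at hs ⊢
  intro a b c d hab hbc hcd
  exact hs _ _ _ _ (e.lt_iff_lt.2 hab) (e.lt_iff_lt.2 hbc) (e.lt_iff_lt.2 hcd)

section Convolution

variable (f g : ℕ → ℂ)

theorem convSeq_eq_sum {n : ℕ} (hn : 0 < n) :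
    convSeq f g n = ∑ s ∈ Finset.univ.filter (IsNC (n := n)), fval f s * fval g (kreweras s) := by
  obtain ⟨k, rfl⟩ := Nat.exists_eq_succ_of_ne_zero hn.ne'
  symm
  apply Finset.sum_subtype
  simp

theorem pinchSeq_eq_sum {n : ℕ} (hn : 0 < n) :
    pinchSeq f g n = ∑ s ∈ Finset.univ.filter (IsNCPrime hn), fval f s * fval g (kreweras s) := by
  obtain ⟨k, rfl⟩ := Nat.exists_eq_succ_of_ne_zero hn.ne'
  symm
  apply Finset.sum_subtype
  simp

variable {f} in
theorem fval_mul_fval_kreweras_glue (hf : f 1 = 1) {n : ℕ} (hn : 0 < n) {c : Composition n}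
    {P : ∀ i, Setoid (Fin (c.blocksFun i))} (hP : ∀ i, IsNCPrime (c.one_le_blocksFun i) (P i)) :
    fval f (c.glue P) * fval g (kreweras (c.glue P)) =
      f c.length * ∏ i, fval f (P i) * fval g (kreweras (P i)) := by
  have hK : kreweras (c.glue P) = c.juxtapose fun i => kreweras (P i) := by
    rw [kreweras_eq_sameSide (c.isNC_glue fun i => (hP i).1),
      Composition.sameSide_glue fun i => (hP i).2]
    simp only [kreweras_eq_sameSide (hP _).1]
  rw [hK, Composition.fval_glue hf (fun i => (hP i).2) hn, Composition.fval_juxtapose,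
    Composition.fval_juxtapose, Finset.prod_mul_distrib, mul_assoc]

variable {f} in
theorem convSeq_eq_sum_compositions (hf : f 1 = 1) {n : ℕ} (hn : 0 < n) :
    convSeq f g n = ∑ c : Composition n, f c.length * ∏ i, pinchSeq f g (c.blocksFun i) := by
  rw [convSeq_eq_sum f g hn, ← Finset.sum_fiberwise _ fun s => zeroBlockComposition s hn]
  refine Finset.sum_congr rfl fun c _ => ?_
  simp only [pinchSeq_eq_sum f g (c.one_le_blocksFun _), Finset.prod_univ_sum, Finset.mul_sum]
  symm
  refine Finset.sum_nbij' c.glue c.restrict ?_ ?_ ?_ ?_ ?_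
  all_goals simp only [Fintype.mem_piFinset, Finset.mem_filter, Finset.mem_univ, true_and]
  · exact fun P hP => ⟨c.isNC_glue fun i => (hP i).1, zeroBlockComposition_glue c P⟩
  · rintro s ⟨hs, rfl⟩ i
    exact ⟨hs.comap _, zeroIsSingleton_restrict_zeroBlockComposition i⟩
  · exact fun P hP => Composition.restrict_glue fun i => (hP i).2
  · rintro s ⟨hs, rfl⟩
    exact glue_restrict_zeroBlockComposition hs
  · exact fun P hP => (fval_mul_fval_kreweras_glue g hf hn hP).symm

end Convolution

namespace Composition

variable {n k : ℕ}

def ofFn (l : Fin k → ℕ) (hpos : ∀ i, 0 < l i) (hsum : ∑ i, l i = n) : Composition n where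
  blocks := List.ofFn l
  blocks_pos hi := by
    obtain ⟨i, rfl⟩ := List.mem_ofFn.1 hi
    exact hpos i
  blocks_sum := by rw [List.sum_ofFn, hsum]

@[simp]
theorem ofFn_blocks (l : Fin k → ℕ) (hpos : ∀ i, 0 < l i) (hsum : ∑ i, l i = n) :
    (ofFn l hpos hsum).blocks = List.ofFn l := rfl

theorem ofFn_length (l : Fin k → ℕ) (hpos : ∀ i, 0 < l i) (hsum : ∑ i, l i = n) :
    (ofFn l hpos hsum).length = k := by
  simp [Composition.length]

theorem toFinsupp_blocks_apply (c : Composition n) (i : Fin c.length) :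
    c.blocks.toFinsupp i = c.blocksFun i :=
  List.toFinsupp_apply_lt _ _ i.isLt

theorem prod_blocksFun (c : Composition n) (p : ℕ → ℂ) :
    ∏ i, p (c.blocksFun i) = ∏ i ∈ Finset.range c.length, p (c.blocks.toFinsupp i) := by
  rw [← Fin.prod_univ_eq_prod_range]
  exact Finset.prod_congr rfl fun i _ => by rw [toFinsupp_blocks_apply]

end Composition

theorem coeff_mk_pow (p : ℕ → ℂ) (hp : p 0 = 0) (n k : ℕ) :
    PowerSeries.coeff n (PowerSeries.mk p ^ k) =
      ∑ c ∈ Finset.univ.filter fun c : Composition n => c.length = k, ∏ i, p (c.blocksFun i) := by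
  rw [PowerSeries.coeff_pow]
  simp only [PowerSeries.coeff_mk]
  rw [← Finset.sum_filter_of_ne (p := fun l => ∀ i ∈ Finset.range k, 0 < l i) fun l _ hne i hi =>
    Nat.pos_of_ne_zero fun h => hne (Finset.prod_eq_zero hi (by rw [h, hp]))]
  symm
  refine Finset.sum_bij' (fun c _ => c.blocks.toFinsupp)
    (fun l hl => Composition.ofFn (fun i : Fin k => l i) ?_ ?_) ?_ ?_ ?_ ?_ ?_
  · exact fun i => (Finset.mem_filter.1 hl).2 i (Finset.mem_range.2 i.isLt)
  · rw [Fin.sum_univ_eq_sum_range (fun i => l i)]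
    exact (Finset.mem_finsuppAntidiag.1 (Finset.mem_filter.1 hl).1).1
  · rintro c hc
    obtain rfl := (Finset.mem_filter.1 hc).2
    refine Finset.mem_filter.2 ⟨Finset.mem_finsuppAntidiag.2 ⟨?_, List.toFinsupp_support_subset _⟩,
      fun i hi => ?_⟩
    · simp [← Fin.sum_univ_eq_sum_range]
    · rw [Composition.toFinsupp_blocks_apply c ⟨i, Finset.mem_range.1 hi⟩]
      exact c.one_le_blocksFun _
  · exact fun l _ => Finset.mem_filter.2 ⟨Finset.mem_univ _, Composition.ofFn_length _ _ _⟩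
  · rintro c hc
    obtain rfl := (Finset.mem_filter.1 hc).2
    refine Composition.ext (List.ext_get (by simp) fun i h₁ h₂ => ?_)
    simp
  · intro l hl
    ext i
    change (List.ofFn fun j : Fin k => l j).getD i 0 = l i
    by_cases hi : i < k
    · simp [hi]
    · rw [List.getD_eq_default _ _ (by simpa using hi), eq_comm, ← Finsupp.notMem_support_iff]
      exact fun h => hi (Finset.mem_range.1
        ((Finset.mem_finsuppAntidiag.1 (Finset.mem_filter.1 hl).1).2 h))
  · rintro c hc
    obtain rfl := (Finset.mem_filter.1 hc).2
    exact c.prod_blocksFun p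

theorem phiSeries_eq_mk {p : ℕ → ℂ} (hp : p 0 = 0) : phiSeries p = PowerSeries.mk p := by
  ext n
  rcases n with _ | n <;> simp [phiSeries, hp]

theorem sum_coeff_phiSeries_mul_sum_length_eq {n : ℕ} (hn : 0 < n) (F : ℕ → ℂ)
    (w : Composition n → ℂ) :
    ∑ k ∈ Finset.range (n + 1), PowerSeries.coeff k (phiSeries F) *
        ∑ c ∈ Finset.univ.filter (fun c : Composition n => c.length = k), w c =
      ∑ c : Composition n, F c.length * w c := by
  rw [← Finset.sum_fiberwise_of_maps_to (g := Composition.length) (t := Finset.range (n + 1))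
    fun c _ => Finset.mem_range.2 (Nat.lt_succ_of_le c.length_le)]
  refine Finset.sum_congr rfl fun k _ => ?_
  rw [Finset.mul_sum]
  refine Finset.sum_congr rfl fun c hc => ?_
  obtain rfl := (Finset.mem_filter.1 hc).2
  simp [phiSeries, (c.length_pos_of_pos hn).ne']

theorem phi_comp_pinched_eq_phi_conv_general (f g : ℕ → ℂ) (hf : f 1 = 1) :
    pscomp (phiSeries f) (phiSeries (pinchSeq f g)) = phiSeries (convSeq f g) := by
  ext n
  rw [pscomp, PowerSeries.coeff_mk, phiSeries_eq_mk (p := pinchSeq f g) rfl]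
  rcases Nat.eq_zero_or_pos n with rfl | hn
  · simp [phiSeries]
  simp only [coeff_mk_pow (pinchSeq f g) rfl, sum_coeff_phiSeries_mul_sum_length_eq hn,
    ← convSeq_eq_sum_compositions g hf hn]
  simp [phiSeries, hn.ne']

/-- For `f, g ∈ M₁` (multiplicative functions with
`f(0₁,1₁) = g(0₁,1₁) = 1`), the pinched convolution `f ⋆̌ g`, defined by
`(f ⋆̌ g)(0_n,1_n) = Σ_{π ∈ NC'(n)} f(0_n, π) g(0_n, K(π))`, satisfies
`φ_f(φ_{f ⋆̌ g}(z)) = φ_{f ∗ g}(z)`, where `φ_h(z) = Σ_{n≥1} h(0_n,1_n) zⁿ`. -/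
theorem phi_comp_pinched_eq_phi_conv (f g : ℕ → ℂ) (hf : f 1 = 1) (hg : g 1 = 1) :
    pscomp (phiSeries f) (phiSeries (pinchSeq f g)) = phiSeries (convSeq f g) :=
  phi_comp_pinched_eq_phi_conv_general f g hf

end
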